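/- Let σ : E → E be the shift operation defined by (σf)(i) = f(i−1) for all i ∈ ℤ, and for X ⊆ E let σX = {σf : f ∈ X}. If A_X is a benign subgroup of the free group F of rank 3, then A_{σX} is a benign subgroup of F. -/

import Mathlib

/-!
STATEMENT 12: Let `σ : E → E` be the shift `(σf)(i) = f(i−1)` and `σX = {σf : f ∈ X}`.
If `A_X` is a benign subgroup of the free group `F` of rank 3, then so is `A_{σX}`.
-/

noncomputable section

/-- The free group `F` of rank 3 on the generators `a, b, c`. -/
abbrev F3 := FreeGroup (Fin 3)

def aF : F3 := FreeGroup.of 0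
def bF : F3 := FreeGroup.of 1
def cF : F3 := FreeGroup.of 2

/-- `b_i = c⁻ⁱ b cⁱ`. -/
def bIdx (i : ℤ) : F3 := cF ^ (-i) * bF * cF ^ i

/-- `b_f = ∏ b_i^{f(i)}`, the product over the support of `f` in increasing order of `i`. -/
def bW (f : ℤ →₀ ℤ) : F3 :=
  ((f.support.sort (· ≤ ·)).map fun i => bIdx i ^ f i).prod

/-- `a_f = b_f⁻¹ a b_f`. -/
def aW (f : ℤ →₀ ℤ) : F3 := (bW f)⁻¹ * aF * bW f

/-- `A_X = ⟨a_f : f ∈ X⟩ ≤ F`. -/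
def AX (X : Set (ℤ →₀ ℤ)) : Subgroup F3 := Subgroup.closure (aW '' X)

/-- `H` is a benign subgroup of `G`: there are a finitely presented group `K`
(a presented group on finitely many generators with finitely many relators), an injective
homomorphism `φ : G → K` and a finitely generated subgroup `L ≤ K` with `φ(G) ∩ L = φ(H)`. -/
def Benign {G : Type*} [Group G] (H : Subgroup G) : Prop :=
  ∃ (n : ℕ) (rels : Set (FreeGroup (Fin n))) (φ : G →* PresentedGroup rels)
    (L : Subgroup (PresentedGroup rels)),
    rels.Finite ∧ Function.Injective φ ∧ L.FG ∧
      Subgroup.map φ ⊤ ⊓ L = Subgroup.map φ H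

/-- `σX = {σf : f ∈ X}` where `(σf)(i) = f(i−1)`. -/
def sigmaSet (X : Set (ℤ →₀ ℤ)) : Set (ℤ →₀ ℤ) :=
  {g | ∃ f ∈ X, ∀ i : ℤ, g i = f (i - 1)}

/-
The shift `σ` on indices is realised by the automorphism of `F` fixing `a` and `c` and sending
`b` to `c⁻¹ b c`: it maps each `b_i` to `b_{i+1}`, hence `b_f` to `b_{σf}` and `a_f` to
`a_{σf}`, so it carries `A_X` onto `A_{σX}`. Benignity is invariant under isomorphisms,
since one may precompose the embedding into a finitely presented group with the inverse.
-/

theorem Benign.map_mulEquiv {G G' : Type*} [Group G] [Group G'] {H : Subgroup G}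
    (hH : Benign H) (e : G ≃* G') : Benign (H.map (e : G →* G')) := by
  obtain ⟨n, rels, φ, L, hrels, hφ, hL, hHL⟩ := hH
  refine ⟨n, rels, φ.comp (e.symm : G' →* G), L, hrels, hφ.comp e.symm.injective, hL, ?_⟩
  rwa [← Subgroup.map_map, ← Subgroup.map_map, Subgroup.map_top_of_surjective _ e.symm.surjective,
    (Subgroup.map_symm_eq_iff_map_eq H).mpr rfl]

def shiftHom (k : ℤ) : F3 →* F3 := FreeGroup.lift ![aF, bIdx k, cF]

@[simp] lemma shiftHom_aF (k : ℤ) : shiftHom k aF = aF := by simp [shiftHom, aF]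
@[simp] lemma shiftHom_bF (k : ℤ) : shiftHom k bF = bIdx k := by simp [shiftHom, bF]
@[simp] lemma shiftHom_cF (k : ℤ) : shiftHom k cF = cF := by simp [shiftHom, cF]

lemma shiftHom_bIdx (k i : ℤ) : shiftHom k (bIdx i) = bIdx (i + k) := by
  simp only [bIdx, map_mul, map_zpow, shiftHom_bF, shiftHom_cF, neg_add, zpow_add]
  group

lemma shiftHom_comp (k l : ℤ) : (shiftHom k).comp (shiftHom l) = shiftHom (l + k) := by
  refine FreeGroup.ext_hom _ _ fun x => ?_
  fin_cases x
  · change shiftHom k (shiftHom l aF) = shiftHom (l + k) aF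
    simp
  · change shiftHom k (shiftHom l bF) = shiftHom (l + k) bF
    simp [shiftHom_bIdx]
  · change shiftHom k (shiftHom l cF) = shiftHom (l + k) cF
    simp

lemma shiftHom_zero : shiftHom 0 = MonoidHom.id F3 := by
  refine FreeGroup.ext_hom _ _ fun x => ?_
  fin_cases x <;> simp [shiftHom, bIdx, aF, bF, cF]

def shiftAut (k : ℤ) : F3 ≃* F3 :=
  MonoidHom.toMulEquiv (shiftHom k) (shiftHom (-k))
    (by rw [shiftHom_comp, add_neg_cancel, shiftHom_zero])
    (by rw [shiftHom_comp, neg_add_cancel, shiftHom_zero])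

def shiftE (k : ℤ) (f : ℤ →₀ ℤ) : ℤ →₀ ℤ := Finsupp.equivMapDomain (Equiv.addRight k) f

lemma shiftE_apply (k : ℤ) (f : ℤ →₀ ℤ) (i : ℤ) : shiftE k f i = f (i - k) := by
  simp [shiftE, sub_eq_add_neg]

lemma bW_shiftE (k : ℤ) (f : ℤ →₀ ℤ) : bW (shiftE k f) = shiftHom k (bW f) := by
  have hsort : (shiftE k f).support.sort (· ≤ ·) = (f.support.sort (· ≤ ·)).map (· + k) :=
    ((add_left_strictMono (a := k)).strictMonoOn _).map_finsetSort.symm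
  rw [bW, bW, map_list_prod, List.map_map, hsort, List.map_map]
  refine congrArg List.prod (List.map_congr_left fun i _ => ?_)
  simp [shiftHom_bIdx, shiftE_apply]

lemma aW_shiftE (k : ℤ) (f : ℤ →₀ ℤ) : aW (shiftE k f) = shiftHom k (aW f) := by
  simp [aW, bW_shiftE]

lemma AX_image_shiftE (k : ℤ) (X : Set (ℤ →₀ ℤ)) :
    AX (shiftE k '' X) = (AX X).map (shiftAut k : F3 →* F3) := by
  rw [AX, AX, MonoidHom.map_closure, Set.image_image, ← Set.image_comp]
  exact congrArg (fun s => Subgroup.closure (s '' X)) (funext (aW_shiftE k))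

lemma sigmaSet_eq_image_shiftE (X : Set (ℤ →₀ ℤ)) : sigmaSet X = shiftE 1 '' X := by
  ext g
  constructor
  · rintro ⟨f, hf, hg⟩
    exact ⟨f, hf, Finsupp.ext fun i => by rw [shiftE_apply, hg]⟩
  · rintro ⟨f, hf, rfl⟩
    exact ⟨f, hf, shiftE_apply 1 f⟩

/-- If `A_X` is benign in `F`, then so is `A_{σX}`. -/
theorem stmt12 (X : Set (ℤ →₀ ℤ)) (h : Benign (AX X)) : Benign (AX (sigmaSet X)) := by
  rw [sigmaSet_eq_image_shiftE, AX_image_shiftE]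
  exact h.map_mulEquiv (shiftAut 1)
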